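/- (Generalized Li criterion for multisets, Theorem 3.) Let σ be a real number, ι a countable index type, and ρ : ι → ℂ a family of complex numbers such that: for every real a ≠ σ one has ρ(i) ≠ 2σ − a and ρ(i) ≠ a for all i; the families i ↦ (1 + |Re ρ(i)|)/(1 + |ρ(i) + a − 2σ|²) and i ↦ (1 + |Re ρ(i)|)/(1 + |ρ(i) − a|²) are summable for every real a; and the family is closed under the symmetry ρ ↦ 2σ − ρ with multiplicity, i.e. there is a bijection τ : ι → ι with ρ(τ(i)) = 2σ − ρ(i) for all i. Then the following are equivalent: (a) Re ρ(i) = σ for every i; (b) for every real a ≠ σ and every positive integer n the family i ↦ Re(1 − ((ρ(i) − a)/(ρ(i) + a − 2σ))^n) is summable with Σ_i Re(1 − ((ρ(i) − a)/(ρ(i) + a − 2σ))^n) ≥ 0. -/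

import Mathlib

/-!
If `Re ρᵢ = σ` for all `i`, every `zᵢ = (ρᵢ - a) / (ρᵢ + a - 2σ)` lies on the unit circle, where
`0 ≤ Re (1 - zⁿ) ≤ n² Re (1 - z)`, and `Re (1 - zᵢ)` is dominated by the summable weights.

Conversely, the symmetry `ρ ↦ 2σ - ρ` turns an off-line `ρ` into one with `Re ρ < σ`; for
`a = σ + 1` its `z` has modulus `r > 1`. Fix `1 < t < √r`. Only finitely many `zᵢ` have modulus
above `t`, and for all others `Re (1 - zᵢⁿ) ≤ n² t²ⁿ Vᵢ`, where `Vᵢ = Re (1 - zᵢ^{±1})` with the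
sign putting `zᵢ^{±1}` in the closed unit disc, and `V` is summable. Recurrence of `n • θ` on a
compact torus gives arbitrarily large `n` with all the finitely many large `zᵢⁿ` in the sector
`|arg| < π/3`, so the `n`-th sum is at most `#B - rⁿ/2 + n² t²ⁿ ∑ V < 0` for such large `n`.
-/

open Complex Filter Topology

namespace Complex

theorem two_mul_re_one_sub (ζ : ℂ) : 2 * (1 - ζ).re = (1 - ‖ζ‖ ^ 2) + ‖1 - ζ‖ ^ 2 := by
  simp only [Complex.sq_norm, normSq_apply, sub_re, sub_im, one_re, one_im]
  ring

theorem re_one_sub_eq_add_sq_norm_mul (u : ℂ) :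
    (1 - u).re = (1 - ‖u‖ ^ 2) + ‖u‖ ^ 2 * (1 - u⁻¹).re := by
  rcases eq_or_ne u 0 with rfl | hu
  · simp
  have : normSq u ≠ 0 := (map_ne_zero normSq).2 hu
  simp only [Complex.sq_norm, sub_re, one_re, inv_re]
  field_simp
  ring

theorem norm_one_sub_pow_le {ζ : ℂ} (hζ : ‖ζ‖ ≤ 1) (n : ℕ) : ‖1 - ζ ^ n‖ ≤ n * ‖1 - ζ‖ := by
  induction n with
  | zero => simp
  | succ n ih =>
    calc ‖1 - ζ ^ (n + 1)‖ = ‖(1 - ζ ^ n) + ζ ^ n * (1 - ζ)‖ := by ring_nf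
      _ ≤ n * ‖1 - ζ‖ + ‖1 - ζ‖ := by
        refine norm_add_le_of_le ih ?_
        rw [norm_mul, norm_pow]
        exact mul_le_of_le_one_left (norm_nonneg _) (pow_le_one₀ (norm_nonneg _) hζ)
      _ = (n + 1 : ℕ) * ‖1 - ζ‖ := by push_cast; ring

theorem re_one_sub_pow_nonneg {ζ : ℂ} (hζ : ‖ζ‖ ≤ 1) (n : ℕ) : 0 ≤ (1 - ζ ^ n).re := by
  have := (re_le_norm (ζ ^ n)).trans (norm_pow ζ n ▸ pow_le_one₀ (norm_nonneg _) hζ)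
  simpa using this

theorem re_one_sub_pow_le_of_norm_le_one {ζ : ℂ} (hζ : ‖ζ‖ ≤ 1) (n : ℕ) :
    (1 - ζ ^ n).re ≤ n ^ 2 * (1 - ζ).re := by
  have hdisc : 0 ≤ 1 - ‖ζ‖ ^ 2 := by nlinarith [norm_nonneg ζ]
  have hbern : 1 - (‖ζ‖ ^ 2) ^ n ≤ n * (1 - ‖ζ‖ ^ 2) := by
    have := one_add_mul_le_pow (a := ‖ζ‖ ^ 2 - 1) (by nlinarith [sq_nonneg ‖ζ‖]) n
    rw [add_sub_cancel] at this
    linarith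
  have hn : (n : ℝ) ≤ n ^ 2 := by
    rcases n.eq_zero_or_pos with rfl | hn
    · simp
    · nlinarith [(Nat.one_le_cast (α := ℝ)).2 hn]
  have hnorm : ‖1 - ζ ^ n‖ ^ 2 ≤ n ^ 2 * ‖1 - ζ‖ ^ 2 := by
    rw [← mul_pow]
    exact pow_le_pow_left₀ (norm_nonneg _) (norm_one_sub_pow_le hζ n) 2
  suffices 2 * (1 - ζ ^ n).re ≤ n ^ 2 * (2 * (1 - ζ).re) by linarith
  rw [two_mul_re_one_sub, two_mul_re_one_sub, norm_pow, ← pow_mul, mul_comm n, pow_mul]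
  calc 1 - (‖ζ‖ ^ 2) ^ n + ‖1 - ζ ^ n‖ ^ 2 ≤ n * (1 - ‖ζ‖ ^ 2) + n ^ 2 * ‖1 - ζ‖ ^ 2 :=
        add_le_add hbern hnorm
    _ ≤ n ^ 2 * (1 - ‖ζ‖ ^ 2 + ‖1 - ζ‖ ^ 2) := by
        nlinarith [mul_le_mul_of_nonneg_right hn hdisc]

theorem re_one_sub_pow_le_of_one_le_norm {ζ : ℂ} (hζ : 1 ≤ ‖ζ‖) (n : ℕ) :
    (1 - ζ ^ n).re ≤ (‖ζ‖ ^ 2) ^ n * (n ^ 2 * (1 - ζ⁻¹).re) := by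
  have hinv : ‖ζ⁻¹‖ ≤ 1 := by rw [norm_inv]; exact inv_le_one_of_one_le₀ hζ
  have hpow : 1 ≤ (‖ζ‖ ^ 2) ^ n := one_le_pow₀ (one_le_pow₀ hζ)
  rw [re_one_sub_eq_add_sq_norm_mul, norm_pow, ← inv_pow, ← pow_mul, mul_comm n, pow_mul]
  have := re_one_sub_pow_nonneg hinv n
  have := mul_le_mul_of_nonneg_left (re_one_sub_pow_le_of_norm_le_one hinv n)
    (zero_le_one.trans hpow)
  linarith

noncomputable def foldUnitDisc (ζ : ℂ) : ℂ := if ‖ζ‖ ≤ 1 then ζ else ζ⁻¹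

theorem norm_foldUnitDisc_le_one (ζ : ℂ) : ‖foldUnitDisc ζ‖ ≤ 1 := by
  unfold foldUnitDisc
  split_ifs with h
  · exact h
  · rw [norm_inv]; exact inv_le_one_of_one_le₀ (not_le.1 h).le

theorem re_one_sub_foldUnitDisc_nonneg (ζ : ℂ) : 0 ≤ (1 - foldUnitDisc ζ).re := by
  simpa using re_one_sub_pow_nonneg (norm_foldUnitDisc_le_one ζ) 1

theorem re_one_sub_pow_le_foldUnitDisc {ζ : ℂ} {t : ℝ} (ht : 1 ≤ t) (hζ : ‖ζ‖ ≤ t) (n : ℕ) :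
    (1 - ζ ^ n).re ≤ n ^ 2 * (t ^ 2) ^ n * (1 - foldUnitDisc ζ).re := by
  have hV := re_one_sub_foldUnitDisc_nonneg ζ
  unfold foldUnitDisc at hV ⊢
  split_ifs at hV ⊢ with h
  · have : (n : ℝ) ^ 2 ≤ n ^ 2 * (t ^ 2) ^ n :=
      le_mul_of_one_le_right (by positivity) (one_le_pow₀ (one_le_pow₀ ht))
    exact (re_one_sub_pow_le_of_norm_le_one h n).trans (mul_le_mul_of_nonneg_right this hV)
  · have : (‖ζ‖ ^ 2) ^ n ≤ (t ^ 2) ^ n := by gcongr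
    calc (1 - ζ ^ n).re ≤ (‖ζ‖ ^ 2) ^ n * (n ^ 2 * (1 - ζ⁻¹).re) :=
          re_one_sub_pow_le_of_one_le_norm (not_le.1 h).le n
      _ ≤ (t ^ 2) ^ n * (n ^ 2 * (1 - ζ⁻¹).re) := by gcongr
      _ = _ := by ring

theorem re_pow_eq_norm_pow_mul_cos (z : ℂ) (n : ℕ) :
    (z ^ n).re = ‖z‖ ^ n * (n • (z.arg : Real.Angle)).cos := by
  rw [← arg_pow_coe_angle, Real.Angle.cos_coe, ← norm_pow, norm_mul_cos_arg]

theorem norm_div_eq_one_of_re_eq {ρ : ℂ} {a σ : ℝ} (hρ : ρ.re = σ) (ha : a ≠ σ) :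
    ‖(ρ - a) / (ρ + a - 2 * σ)‖ = 1 := by
  have hD : ρ + a - 2 * σ ≠ 0 := fun h => ha (by have := congrArg re h; simp [hρ] at this; linarith)
  rw [norm_div, div_eq_one_iff_eq (norm_ne_zero_iff.2 hD),
    ← sq_eq_sq₀ (norm_nonneg _) (norm_nonneg _), Complex.sq_norm, Complex.sq_norm]
  simp only [normSq_apply, sub_re, add_re, sub_im, add_im, ofReal_re, ofReal_im, mul_re, mul_im,
    re_ofNat, im_ofNat, hρ]
  ring

theorem re_one_sub_div_le_of_re_eq {ρ : ℂ} {a σ : ℝ} (hρ : ρ.re = σ) (ha : a ≠ σ) :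
    (1 - (ρ - a) / (ρ + a - 2 * σ)).re
      ≤ 2 * (1 + (a - σ) ^ 2) * ((1 + |ρ.re|) / (1 + ‖ρ + a - 2 * σ‖ ^ 2)) := by
  set D := ρ + a - 2 * σ
  have hDre : D.re = a - σ := by simp [D, hρ]; ring
  have hD : D ≠ 0 := fun h => ha (by rw [h, zero_re] at hDre; linarith)
  have hDnorm : (a - σ) ^ 2 ≤ ‖D‖ ^ 2 := by
    rw [← hDre, ← sq_abs]; exact pow_le_pow_left₀ (abs_nonneg _) (abs_re_le_norm D) 2
  have hDpos : 0 < ‖D‖ ^ 2 := by positivity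
  have h1 : 1 - (ρ - a) / D = ((2 * (a - σ) : ℝ) : ℂ) / D := by
    field_simp; simp only [D]; push_cast; ring
  rw [h1, div_re, ofReal_re, ofReal_im, zero_mul, zero_div, add_zero, hDre, ← Complex.sq_norm]
  calc 2 * (a - σ) * (a - σ) / ‖D‖ ^ 2 ≤ 2 * (1 + (a - σ) ^ 2) / (1 + ‖D‖ ^ 2) := by
        rw [div_le_div_iff₀ hDpos (by positivity)]; nlinarith
    _ ≤ 2 * (1 + (a - σ) ^ 2) * ((1 + |ρ.re|) / (1 + ‖D‖ ^ 2)) := by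
        rw [← mul_one_div]; gcongr; linarith [abs_nonneg ρ.re]

noncomputable def cayley (w : ℂ) : ℂ := (w - 1) / (w + 1)

theorem norm_cayley_le_one_iff {w : ℂ} (hw : w + 1 ≠ 0) : ‖cayley w‖ ≤ 1 ↔ 0 ≤ w.re := by
  rw [cayley, norm_div, div_le_one (norm_pos_iff.2 hw), ← sq_le_sq₀ (norm_nonneg _) (norm_nonneg _),
    Complex.sq_norm, Complex.sq_norm]
  simp only [normSq_apply, sub_re, add_re, sub_im, add_im, one_re, one_im]
  constructor <;> intro h <;> nlinarith

theorem one_sub_cayley {w : ℂ} (hw : w + 1 ≠ 0) : 1 - cayley w = 2 / (w + 1) := by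
  rw [cayley]; field_simp; ring

theorem one_sub_inv_cayley {w : ℂ} (hw : w - 1 ≠ 0) : 1 - (cayley w)⁻¹ = 2 / (1 - w) := by
  have : 1 - w ≠ 0 := fun h => hw (by linear_combination -h)
  rw [cayley, inv_div]; field_simp; ring

theorem re_two_div_le {v : ℂ} (hv : 1 ≤ v.re) : (2 / v).re ≤ 4 * v.re / (1 + ‖v‖ ^ 2) := by
  have hnorm : 1 ≤ ‖v‖ ^ 2 := one_le_pow₀ (hv.trans (re_le_norm v))
  have : (2 / v).re = 2 * v.re / ‖v‖ ^ 2 := by simp [div_re, Complex.sq_norm]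
  rw [this, div_le_div_iff₀ (by positivity) (by positivity)]
  nlinarith

theorem re_one_sub_foldUnitDisc_cayley_le {w : ℂ} (hadd : w + 1 ≠ 0) (hsub : w - 1 ≠ 0) :
    (1 - foldUnitDisc (cayley w)).re
      ≤ 4 * ((1 + |w.re|) / (1 + ‖w + 1‖ ^ 2) + (1 + |w.re|) / (1 + ‖w - 1‖ ^ 2)) := by
  unfold foldUnitDisc
  split_ifs with h
  · have hre := (norm_cayley_le_one_iff hadd).1 h
    calc (1 - cayley w).re = (2 / (w + 1)).re := by rw [one_sub_cayley hadd]
      _ ≤ 4 * (w + 1).re / (1 + ‖w + 1‖ ^ 2) := re_two_div_le (by simpa using hre)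
      _ = 4 * ((1 + |w.re|) / (1 + ‖w + 1‖ ^ 2)) := by
        rw [abs_of_nonneg hre, add_re, one_re]; ring
      _ ≤ _ := by gcongr; exact le_add_of_nonneg_right (by positivity)
  · have hre : w.re < 0 := not_le.1 fun h' => h ((norm_cayley_le_one_iff hadd).2 h')
    calc (1 - (cayley w)⁻¹).re = (2 / (1 - w)).re := by rw [one_sub_inv_cayley hsub]
      _ ≤ 4 * (1 - w).re / (1 + ‖1 - w‖ ^ 2) := re_two_div_le (by simp; linarith)
      _ = 4 * ((1 + |w.re|) / (1 + ‖w - 1‖ ^ 2)) := by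
        rw [abs_of_neg hre, sub_re, one_re, norm_sub_rev]; ring
      _ ≤ _ := by gcongr; exact le_add_of_nonneg_left (by positivity)

theorem norm_add_one_lt_of_lt_norm_cayley {w : ℂ} {t : ℝ} (ht : 1 < t) (h : t < ‖cayley w‖) :
    ‖w + 1‖ < 2 / (t - 1) := by
  have hw : w + 1 ≠ 0 := fun hw => by simp [cayley, hw] at h; linarith
  rw [cayley, norm_div, lt_div_iff₀ (norm_pos_iff.2 hw)] at h
  have : ‖w - 1‖ ≤ ‖w + 1‖ + 2 := by
    simpa [show w - 1 = w + 1 - 2 by ring] using norm_sub_le (w + 1) 2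
  rw [lt_div_iff₀ (by linarith)]
  linarith

end Complex

theorem summable_re_one_sub_pow {ι : Type*} {z : ι → ℂ} (hz : ∀ i, ‖z i‖ ≤ 1)
    (hs : Summable fun i => (1 - z i).re) (n : ℕ) : Summable fun i => (1 - z i ^ n).re :=
  Summable.of_nonneg_of_le (fun i => re_one_sub_pow_nonneg (hz i) n)
    (fun i => re_one_sub_pow_le_of_norm_le_one (hz i) n) (hs.mul_left _)

theorem frequently_atTop_nsmul_mem_nhds_zero {G : Type*} [AddGroup G] [TopologicalSpace G]
    [IsTopologicalAddGroup G] [CompactSpace G] [FirstCountableTopology G] (x : G) {U : Set G}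
    (hU : U ∈ 𝓝 0) : ∃ᶠ n : ℕ in atTop, n • x ∈ U := by
  obtain ⟨a, φ, hφ, hlim⟩ := CompactSpace.tendsto_subseq fun n : ℕ => n • x
  refine frequently_atTop.2 fun L => ?_
  have hdiff : Tendsto (fun k => φ (L + k) • x - φ k • x) atTop (𝓝 0) := by
    simpa using ((hlim.comp (tendsto_add_atTop_nat L)).sub hlim).congr (by simp [add_comm])
  obtain ⟨k, hk⟩ := (hdiff.eventually hU).exists
  refine ⟨φ (L + k) - φ k, ?_, ?_⟩
  · have := hφ.add_le_nat L k
    omega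
  · rwa [sub_nsmul _ (hφ.monotone (Nat.le_add_left k L)), ← sub_eq_add_neg]

instance Real.Angle.instCompactSpace : CompactSpace Real.Angle :=
  haveI : Fact (0 < 2 * Real.pi) := ⟨by positivity⟩
  inferInstanceAs (CompactSpace (AddCircle (2 * Real.pi)))

theorem Real.Angle.frequently_atTop_forall_half_lt_cos_nsmul {s : Type*} [Fintype s]
    (θ : s → Real.Angle) : ∃ᶠ n : ℕ in atTop, ∀ i, 1 / 2 < (n • θ i).cos := by
  have hU : {φ : s → Real.Angle | ∀ i, 1 / 2 < (φ i).cos} ∈ 𝓝 0 := by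
    refine eventually_all.2 fun i => ?_
    refine ((Real.Angle.continuous_cos.comp (continuous_apply i)).tendsto 0).eventually
      (lt_mem_nhds ?_)
    simp only [Function.comp_apply, Pi.zero_apply]
    rw [← Real.Angle.coe_zero, Real.Angle.cos_coe, Real.cos_zero]
    norm_num
  exact frequently_atTop_nsmul_mem_nhds_zero θ hU

theorem eventually_add_mul_pow_lt_pow_div_two (c K : ℝ) {T r : ℝ} (hT : 0 ≤ T) (hTr : T < r)
    (hr : 1 < r) : ∀ᶠ n : ℕ in atTop, c + n ^ 2 * T ^ n * K < r ^ n / 2 := by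
  have hr₀ : 0 < r := one_pos.trans hr
  have hlim : Tendsto (fun n : ℕ => c * r⁻¹ ^ n + K * (n ^ 2 * (T / r) ^ n)) atTop (𝓝 0) := by
    have h₁ :=
      tendsto_pow_atTop_nhds_zero_of_lt_one (inv_nonneg.2 hr₀.le) (inv_lt_one_of_one_lt₀ hr)
    have h₂ := tendsto_pow_const_mul_const_pow_of_abs_lt_one 2
      (r := T / r) (by rw [abs_of_nonneg (by positivity)]; exact (div_lt_one hr₀).2 hTr)
    simpa using (h₁.const_mul c).add (h₂.const_mul K)
  filter_upwards [hlim.eventually_lt_const one_half_pos] with n hn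
  have hrn : 0 < r ^ n := pow_pos hr₀ n
  have : c + n ^ 2 * T ^ n * K = (c * r⁻¹ ^ n + K * (n ^ 2 * (T / r) ^ n)) * r ^ n := by
    rw [inv_pow, div_pow]
    field_simp
  rw [this]
  nlinarith

theorem sum_re_one_sub_pow_le {ι : Type*} (z : ι → ℂ) {B : Finset ι} {i₀ : ι} (hi₀ : i₀ ∈ B)
    {n : ℕ} (hcos : ∀ i ∈ B, 1 / 2 < (n • (z i).arg : Real.Angle).cos) :
    ∑ i ∈ B, (1 - z i ^ n).re ≤ B.card - ‖z i₀‖ ^ n / 2 := by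
  calc ∑ i ∈ B, (1 - z i ^ n).re ≤ ∑ i ∈ B, (1 - ‖z i‖ ^ n / 2) := by
        refine Finset.sum_le_sum fun i hi => ?_
        rw [sub_re, one_re, re_pow_eq_norm_pow_mul_cos]
        nlinarith [hcos i hi, pow_nonneg (norm_nonneg (z i)) n]
    _ = B.card - ∑ i ∈ B, ‖z i‖ ^ n / 2 := by simp [Finset.sum_sub_distrib]
    _ ≤ B.card - ‖z i₀‖ ^ n / 2 := by
        gcongr
        exact Finset.single_le_sum (f := fun i => ‖z i‖ ^ n / 2) (fun i _ => by positivity) hi₀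

theorem exists_tsum_re_one_sub_pow_neg {ι : Type*} {z : ι → ℂ} {t : ℝ} (ht : 1 ≤ t)
    (hfin : {i | t < ‖z i‖}.Finite) {i₀ : ι} (hi₀ : t ^ 2 < ‖z i₀‖)
    (hV : Summable fun i => (1 - foldUnitDisc (z i)).re)
    (hs : ∀ n, 0 < n → Summable fun i => (1 - z i ^ n).re) :
    ∃ n, 0 < n ∧ ∑' i, (1 - z i ^ n).re < 0 := by
  set B := hfin.toFinset
  have hi₀B : i₀ ∈ B := hfin.mem_toFinset.2 (show t < ‖z i₀‖ by nlinarith)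
  obtain ⟨n, hcos, hlt, hn⟩ := ((Real.Angle.frequently_atTop_forall_half_lt_cos_nsmul
      fun i : B => ((z i).arg : Real.Angle)).and_eventually
    ((eventually_add_mul_pow_lt_pow_div_two B.card (∑' i, (1 - foldUnitDisc (z i)).re)
      (sq_nonneg t) hi₀ (by nlinarith)).and (eventually_gt_atTop 0))).exists
  refine ⟨n, hn, ?_⟩
  have hB := sum_re_one_sub_pow_le z hi₀B (n := n) fun i hi => hcos ⟨i, hi⟩
  have hBc : ∑' i : ↑(↑B : Set ι)ᶜ, (1 - z i ^ n).re
      ≤ n ^ 2 * (t ^ 2) ^ n * ∑' i, (1 - foldUnitDisc (z i)).re := by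
    have hle (i : ↑(↑B : Set ι)ᶜ) :
        (1 - z i ^ n).re ≤ n ^ 2 * (t ^ 2) ^ n * (1 - foldUnitDisc (z i)).re :=
      re_one_sub_pow_le_foldUnitDisc ht (not_lt.1 fun h => i.2 (hfin.mem_toFinset.2 h)) n
    refine (Summable.tsum_le_tsum hle ((hs n hn).subtype _) ((hV.mul_left _).subtype _)).trans ?_
    rw [tsum_mul_left]
    gcongr
    exact hV.tsum_subtype_le _ _ (fun i => re_one_sub_foldUnitDisc_nonneg _)
  rw [← (hs n hn).sum_add_tsum_compl (s := B)]
  linarith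

theorem finite_setOf_norm_le_of_summable {ι : Type*} {v : ι → ℂ} {c : ι → ℝ}
    (hc : ∀ i, 1 ≤ c i) (h : Summable fun i => c i / (1 + ‖v i‖ ^ 2)) (R : ℝ) :
    {i | ‖v i‖ ≤ R}.Finite := by
  have hε : 0 < 1 / (1 + R ^ 2) := by positivity
  refine (eventually_cofinite.1 (h.tendsto_cofinite_zero.eventually (gt_mem_nhds hε))).subset
    fun i hi => not_lt.2 ?_
  have hR : ‖v i‖ ^ 2 ≤ R ^ 2 := pow_le_pow_left₀ (norm_nonneg _) hi 2
  calc 1 / (1 + R ^ 2) ≤ 1 / (1 + ‖v i‖ ^ 2) := by gcongr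
    _ ≤ c i / (1 + ‖v i‖ ^ 2) := by gcongr; exact hc i

theorem exists_tsum_re_one_sub_cayley_pow_neg {ι : Type*} {w : ι → ℂ} {c : ι → ℝ}
    (hc : ∀ i, 1 + |(w i).re| ≤ c i) (hadd : ∀ i, w i + 1 ≠ 0) (hsub : ∀ i, w i - 1 ≠ 0)
    (hcadd : Summable fun i => c i / (1 + ‖w i + 1‖ ^ 2))
    (hcsub : Summable fun i => c i / (1 + ‖w i - 1‖ ^ 2)) {i₀ : ι} (hi₀ : (w i₀).re < 0)
    (hs : ∀ n, 0 < n → Summable fun i => (1 - cayley (w i) ^ n).re) :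
    ∃ n, 0 < n ∧ ∑' i, (1 - cayley (w i) ^ n).re < 0 := by
  set r := ‖cayley (w i₀)‖
  have hr : 1 < r := not_le.1 fun h => hi₀.not_ge ((norm_cayley_le_one_iff (hadd i₀)).1 h)
  set t := √((1 + r) / 2)
  have ht2 : t ^ 2 = (1 + r) / 2 := Real.sq_sqrt (by linarith)
  have ht : 1 < t := by rw [Real.lt_sqrt zero_le_one]; linarith
  refine exists_tsum_re_one_sub_pow_neg ht.le ?_ (i₀ := i₀) (by linarith) ?_ hs
  · refine (finite_setOf_norm_le_of_summable (fun i => ?_) hcadd (2 / (t - 1))).subset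
      fun i hi => (norm_add_one_lt_of_lt_norm_cayley ht hi).le
    linarith [hc i, abs_nonneg (w i).re]
  · refine Summable.of_nonneg_of_le (fun i => re_one_sub_foldUnitDisc_nonneg _)
      (fun i => (re_one_sub_foldUnitDisc_cayley_le (hadd i) (hsub i)).trans ?_)
      ((hcadd.add hcsub).mul_left 4)
    gcongr <;> exact hc i

theorem exists_tsum_re_one_sub_div_pow_neg {ι : Type*} {ρ : ι → ℂ} {σ : ℝ}
    (hne : ∀ i, ρ i ≠ 2 * σ - (σ + 1 : ℝ) ∧ ρ i ≠ (σ + 1 : ℝ))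
    (hsum : (Summable fun i => (1 + |(ρ i).re|) / (1 + ‖ρ i + (σ + 1 : ℝ) - 2 * σ‖ ^ 2)) ∧
      Summable fun i => (1 + |(ρ i).re|) / (1 + ‖ρ i - (σ + 1 : ℝ)‖ ^ 2))
    {i₀ : ι} (hi₀ : (ρ i₀).re < σ)
    (hs : ∀ n, 0 < n → Summable fun i =>
      (1 - ((ρ i - (σ + 1 : ℝ)) / (ρ i + (σ + 1 : ℝ) - 2 * σ)) ^ n).re) :
    ∃ n, 0 < n ∧ ∑' i, (1 - ((ρ i - (σ + 1 : ℝ)) / (ρ i + (σ + 1 : ℝ) - 2 * σ)) ^ n).re < 0 := by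
  have hadd i : ρ i + (σ + 1 : ℝ) - 2 * σ = ρ i - σ + 1 := by push_cast; ring
  have hsub i : ρ i - (σ + 1 : ℝ) = ρ i - σ - 1 := by push_cast; ring
  simp only [hadd, hsub] at hsum hs ⊢
  refine exists_tsum_re_one_sub_cayley_pow_neg (w := fun i => ρ i - σ)
    (c := fun i => (1 + |σ|) * (1 + |(ρ i).re|)) (fun i => ?_)
    (fun i h => (hne i).1 (by push_cast; linear_combination h))
    (fun i h => (hne i).2 (by push_cast; linear_combination h))
    (by simpa only [mul_div_assoc] using hsum.1.mul_left (1 + |σ|))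
    (by simpa only [mul_div_assoc] using hsum.2.mul_left (1 + |σ|)) (i₀ := i₀)
    (by simpa using hi₀) hs
  have := abs_sub (ρ i).re σ
  simp only [sub_re, ofReal_re]
  nlinarith [abs_nonneg σ, abs_nonneg (ρ i).re]

theorem generalized_li_criterion_multiset_general (σ : ℝ) (ι : Type*) (ρ : ι → ℂ)
    (hne : ∀ a : ℝ, a ≠ σ → ∀ i, ρ i ≠ 2 * σ - a ∧ ρ i ≠ (a : ℂ))
    (hsum : ∀ a : ℝ,
      (Summable fun i => (1 + |(ρ i).re|) / (1 + ‖ρ i + a - 2 * σ‖ ^ 2)) ∧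
      (Summable fun i => (1 + |(ρ i).re|) / (1 + ‖ρ i - a‖ ^ 2)))
    (τ : ι ≃ ι) (hτ : ∀ i, ρ (τ i) = 2 * σ - ρ i) :
    (∀ i, (ρ i).re = σ) ↔
      ∀ a : ℝ, a ≠ σ → ∀ n : ℕ, 0 < n →
        Summable (fun i => (1 - ((ρ i - a) / (ρ i + a - 2 * σ)) ^ n).re) ∧
        0 ≤ ∑' i, (1 - ((ρ i - a) / (ρ i + a - 2 * σ)) ^ n).re := by
  constructor
  · intro hre a ha n _
    have hz i : ‖(ρ i - a) / (ρ i + a - 2 * σ)‖ ≤ 1 := (norm_div_eq_one_of_re_eq (hre i) ha).le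
    have hs : Summable fun i => (1 - (ρ i - a) / (ρ i + a - 2 * σ)).re :=
      Summable.of_nonneg_of_le (fun i => by simpa using re_one_sub_pow_nonneg (hz i) 1)
        (fun i => re_one_sub_div_le_of_re_eq (hre i) ha) ((hsum a).1.mul_left _)
    exact ⟨summable_re_one_sub_pow hz hs n, tsum_nonneg fun i => re_one_sub_pow_nonneg (hz i) n⟩
  · intro hpos
    by_contra hre
    obtain ⟨j, hj⟩ := not_forall.1 hre
    obtain ⟨i₀, hi₀⟩ : ∃ i, (ρ i).re < σ := by
      rcases lt_or_gt_of_ne hj with h | h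
      · exact ⟨j, h⟩
      · exact ⟨τ j, by simp [hτ]; linarith⟩
    have hσ : σ + 1 ≠ σ := by linarith
    obtain ⟨n, hn, hneg⟩ := exists_tsum_re_one_sub_div_pow_neg (hne _ hσ) (hsum _) hi₀
      fun n hn => (hpos _ hσ n hn).1
    exact hneg.not_ge (hpos _ hσ n hn).2

/-- Generalized Li criterion for multisets, Theorem 3. -/
theorem generalized_li_criterion_multiset (σ : ℝ) (ι : Type*) [Countable ι] (ρ : ι → ℂ)
    (hne : ∀ a : ℝ, a ≠ σ → ∀ i, ρ i ≠ 2 * σ - a ∧ ρ i ≠ (a : ℂ))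
    (hsum : ∀ a : ℝ,
      (Summable fun i => (1 + |(ρ i).re|) / (1 + ‖ρ i + a - 2 * σ‖ ^ 2)) ∧
      (Summable fun i => (1 + |(ρ i).re|) / (1 + ‖ρ i - a‖ ^ 2)))
    (τ : ι ≃ ι) (hτ : ∀ i, ρ (τ i) = 2 * σ - ρ i) :
    (∀ i, (ρ i).re = σ) ↔
      ∀ a : ℝ, a ≠ σ → ∀ n : ℕ, 0 < n →
        Summable (fun i => (1 - ((ρ i - a) / (ρ i + a - 2 * σ)) ^ n).re) ∧
        0 ≤ ∑' i, (1 - ((ρ i - a) / (ρ i + a - 2 * σ)) ^ n).re :=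
  generalized_li_criterion_multiset_general σ ι ρ hne hsum τ hτ
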